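/- Let x_n = n+1/8 for n even and x_n = n−1/8 for n odd, n ∈ ℤ∖{0}, and let μ = Σ_{n≠0} δ_{x_n}. There exists δ>0 such that for every λ ∈ ℂ, Σ_{n≠0} |K_λ(x_n)|² ≥ δ, where K_λ(z) = c_λ·sin(π(z−λ))/(π(z−λ)) is the L²(ℝ)-normalized reproducing kernel of the Paley–Wiener space PW_π (c_λ = ‖sin(π(·−λ))/(π(·−λ))‖_{L²(ℝ)}^{−1}). That is, the L²(μ)-norms of the normalized reproducing kernels of PW_π are uniformly bounded below. -/

import Mathlib

open MeasureTheory Complex Set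

noncomputable section

/-- The normalized cardinal sine `sinc(w) = sin(πw)/(πw)` (with value `1` at `w = 0`). -/
def pwSinc (w : ℂ) : ℂ :=
  if w = 0 then 1 else Complex.sin (Real.pi * w) / (Real.pi * w)

/-- Membership in the Paley–Wiener space `PW_π`: `F` is the Fourier transform of a
function `g ∈ L²([-π, π])`. -/
def memPW (F : ℂ → ℂ) : Prop :=
  ∃ g : ℝ → ℂ, MemLp g 2 (volume.restrict (Icc (-Real.pi) Real.pi)) ∧
    ∀ z : ℂ, F z = ∫ t in Icc (-Real.pi) Real.pi, g t * Complex.exp (Complex.I * z * t)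

/-- `∫_ℝ |sin(π(x-λ))/(π(x-λ))|² dx`, the squared `L²(ℝ)` norm of the (unnormalized)
Paley–Wiener reproducing kernel at `λ`. -/
def sincNormSq (l : ℂ) : ℝ := ∫ x : ℝ, ‖pwSinc ((x : ℂ) - l)‖ ^ 2

/-- The normalization constant `c_λ` of the Paley–Wiener reproducing kernel. -/
def pwC (l : ℂ) : ℝ := 1 / Real.sqrt (sincNormSq l)

/-- The sequence `x_n = n + 1/8` (`n` even), `x_n = n - 1/8` (`n` odd). -/
def xseq (n : ℤ) : ℝ := if Even n then (n : ℝ) + 1 / 8 else (n : ℝ) - 1 / 8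

end

/-!
For `λ = u + iv` and real `x`,
`|sinc(x - λ)|² = (sin²(π(x - u)) + sinh²(πv)) / (π²((x - u)² + v²))`.
A combination of two Cauchy densities dominates it, whence
`‖sinc(· - λ)‖₂² ≤ 2π + sinh²(πv)/(π|v|)`.
For `|v| ≥ 1` the `≈ 2|v|` points `x_n` within `O(|v|)` of `u` each contribute
`≳ sinh²(πv)/v²`, which matches this bound. For `|v| ≤ 1` the norm is bounded, and a single
`x_n` near `u` with `sin²(π(x_n - u)) ≥ 1/8` suffices: consecutive points are `3/4` or `5/4`
apart, so they cannot both lie within `1/8` of `u + ℤ`. (For `x_n = n` this fails at `λ = 0`.)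
-/

open scoped Real
open ProbabilityTheory

lemma Complex.norm_sin_sq (z : ℂ) :
    ‖Complex.sin z‖ ^ 2 = Real.sin z.re ^ 2 + Real.sinh z.im ^ 2 := by
  conv_lhs => rw [← Complex.re_add_im z]
  rw [Complex.sin_add_mul_I, ← Complex.ofReal_sin, ← Complex.ofReal_cosh, ← Complex.ofReal_cos,
    ← Complex.ofReal_sinh, ← Complex.ofReal_mul, ← Complex.ofReal_mul, Complex.sq_norm,
    Complex.normSq_add_mul_I]
  nlinarith [Real.sin_sq_add_cos_sq z.re, Real.cosh_sq z.im]

lemma norm_pwSinc_sq {w : ℂ} (hw : w ≠ 0) :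
    ‖pwSinc w‖ ^ 2 =
      (Real.sin (π * w.re) ^ 2 + Real.sinh (π * w.im) ^ 2) / (π ^ 2 * (w.re ^ 2 + w.im ^ 2)) := by
  rw [pwSinc, if_neg hw, norm_div, div_pow, Complex.norm_sin_sq, Complex.sq_norm,
    Complex.normSq_apply]
  simp only [Complex.mul_re, Complex.mul_im, Complex.ofReal_re, Complex.ofReal_im, zero_mul,
    sub_zero, add_zero]
  ring_nf

lemma norm_pwSinc_ofReal_sub_sq {l : ℂ} {x : ℝ} (hx : (x : ℂ) ≠ l) :
    ‖pwSinc (x - l)‖ ^ 2 =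
      (Real.sin (π * (x - l.re)) ^ 2 + Real.sinh (π * l.im) ^ 2) /
        (π ^ 2 * ((x - l.re) ^ 2 + l.im ^ 2)) := by
  rw [norm_pwSinc_sq (sub_ne_zero.2 hx)]
  simp [mul_neg, Real.sinh_neg]

lemma le_norm_pwSinc_ofReal_sub_sq (l : ℂ) (x : ℝ) :
    (Real.sin (π * (x - l.re)) ^ 2 + Real.sinh (π * l.im) ^ 2) /
        (π ^ 2 * ((x - l.re) ^ 2 + l.im ^ 2)) ≤ ‖pwSinc (x - l)‖ ^ 2 := by
  rcases eq_or_ne (x : ℂ) l with rfl | hx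
  · simp
  · exact (norm_pwSinc_ofReal_sub_sq hx).ge

lemma norm_pwSinc_ofReal_sub_sq_le_of_ne {l : ℂ} {x : ℝ} (hx : x ≠ l.re) :
    ‖pwSinc (x - l)‖ ^ 2 ≤ (1 + Real.sinh (π * l.im) ^ 2) / (π ^ 2 * (x - l.re) ^ 2) := by
  have hxl : (x : ℂ) ≠ l := fun h => hx (by simp [← h])
  rw [norm_pwSinc_ofReal_sub_sq hxl]
  gcongr
  · exact Real.sin_sq_le_one _
  · nlinarith [sq_nonneg l.im]

lemma sin_sq_div_le (t s : ℝ) :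
    Real.sin (π * t) ^ 2 / (π ^ 2 * (t ^ 2 + s ^ 2)) ≤ 2 / (1 + t ^ 2) := by
  rcases eq_or_ne (t ^ 2 + s ^ 2) 0 with h | h
  · rw [h, mul_zero, div_zero]
    positivity
  have hpos : 0 < π ^ 2 * (t ^ 2 + s ^ 2) := by positivity
  rw [div_le_div_iff₀ hpos (by positivity)]
  have hsin : Real.sin (π * t) ^ 2 ≤ (π * t) ^ 2 := by
    simpa only [sq_abs] using pow_le_pow_left₀ (abs_nonneg _) Real.abs_sin_le_abs 2
  have hπ : 1 ≤ π ^ 2 := by nlinarith [Real.pi_gt_three]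
  nlinarith [Real.sin_sq_le_one (π * t), sq_nonneg t, sq_nonneg s, mul_le_mul_of_nonneg_right
    (Real.sin_sq_le_one (π * t)) (sq_nonneg t)]

noncomputable def sincMajorant (l : ℂ) (x : ℝ) : ℝ :=
  2 * π * cauchyPDFReal l.re 1 x +
    Real.sinh (π * l.im) ^ 2 / (π * |l.im|) * cauchyPDFReal l.re ‖l.im‖₊ x

lemma sinh_sq_div_mul_cauchyPDFReal (u v x : ℝ) :
    Real.sinh (π * v) ^ 2 / (π * |v|) * cauchyPDFReal u ‖v‖₊ x =
      Real.sinh (π * v) ^ 2 / (π ^ 2 * ((x - u) ^ 2 + v ^ 2)) := by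
  rcases eq_or_ne v 0 with rfl | hv
  · simp
  rw [cauchyPDFReal_def, coe_nnnorm, Real.norm_eq_abs, sq_abs]
  field_simp

lemma norm_pwSinc_ofReal_sub_sq_le_sincMajorant (l : ℂ) (x : ℝ) :
    ‖pwSinc (x - l)‖ ^ 2 ≤ sincMajorant l x := by
  have hcauchy : 2 * π * cauchyPDFReal l.re 1 x = 2 / (1 + (x - l.re) ^ 2) := by
    rw [cauchyPDFReal_def, NNReal.coe_one]
    field_simp
    ring
  rw [sincMajorant, hcauchy, sinh_sq_div_mul_cauchyPDFReal]
  rcases eq_or_ne (x : ℂ) l with rfl | hx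
  · simp only [sub_self, pwSinc, if_true, norm_one, one_pow, Complex.ofReal_re]
    norm_num
  rw [norm_pwSinc_ofReal_sub_sq hx, add_div]
  exact add_le_add (sin_sq_div_le _ _) le_rfl

lemma integrable_sincMajorant (l : ℂ) : Integrable (sincMajorant l) :=
  ((integrable_cauchyPDFReal _).const_mul _).add ((integrable_cauchyPDFReal _).const_mul _)

lemma integral_sincMajorant (l : ℂ) :
    ∫ x, sincMajorant l x = 2 * π + Real.sinh (π * l.im) ^ 2 / (π * |l.im|) := by
  unfold sincMajorant
  rw [integral_add ((integrable_cauchyPDFReal _).const_mul _)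
    ((integrable_cauchyPDFReal _).const_mul _), integral_const_mul, integral_const_mul,
    integral_cauchyPDFReal_eq_one _ one_ne_zero, mul_one]
  rcases eq_or_ne l.im 0 with h | h
  · simp [h]
  · rw [integral_cauchyPDFReal_eq_one _ (nnnorm_ne_zero_iff.2 h), mul_one]

lemma measurable_pwSinc : Measurable pwSinc :=
  Measurable.ite (measurableSet_singleton 0) measurable_const
    ((Complex.measurable_sin.comp (measurable_id.const_mul _)).div (measurable_id.const_mul _))

lemma integrable_norm_pwSinc_ofReal_sub_sq (l : ℂ) :
    Integrable (fun x : ℝ => ‖pwSinc (x - l)‖ ^ 2) := by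
  have hmeas : Measurable (fun x : ℝ => ‖pwSinc (x - l)‖ ^ 2) :=
    (measurable_pwSinc.comp (Complex.measurable_ofReal.sub_const l)).norm.pow_const 2
  refine (integrable_sincMajorant l).mono' hmeas.aestronglyMeasurable
    (Filter.Eventually.of_forall fun x => ?_)
  rw [Real.norm_of_nonneg (by positivity)]
  exact norm_pwSinc_ofReal_sub_sq_le_sincMajorant l x

lemma sincNormSq_le (l : ℂ) :
    sincNormSq l ≤ 2 * π + Real.sinh (π * l.im) ^ 2 / (π * |l.im|) :=
  integral_sincMajorant l ▸ integral_mono (integrable_norm_pwSinc_ofReal_sub_sq l)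
    (integrable_sincMajorant l) (norm_pwSinc_ofReal_sub_sq_le_sincMajorant l)

lemma sincNormSq_pos (l : ℂ) : 0 < sincNormSq l := by
  rw [sincNormSq, integral_pos_iff_support_of_nonneg (fun x => by positivity)
    (integrable_norm_pwSinc_ofReal_sub_sq l)]
  refine lt_of_lt_of_le ?_ (measure_mono (s := Ioo l.re (l.re + 1)) fun x hx => ?_)
  · simp
  have ht : 0 < x - l.re := sub_pos.2 hx.1
  have hsin : 0 < Real.sin (π * (x - l.re)) :=
    Real.sin_pos_of_pos_of_lt_pi (by positivity) (by nlinarith [hx.2, Real.pi_pos])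
  exact (lt_of_lt_of_le (by positivity) (le_norm_pwSinc_ofReal_sub_sq l x)).ne'

lemma tsum_pwC_mul_sq {ι : Type*} (l : ℂ) (f : ι → ℝ) :
    ∑' i, (pwC l * f i) ^ 2 = (∑' i, f i ^ 2) / sincNormSq l := by
  have hQ : 0 ≤ sincNormSq l := integral_nonneg fun x => by positivity
  simp_rw [mul_pow, pwC, div_pow, one_pow, Real.sq_sqrt hQ]
  rw [tsum_mul_left, one_div_mul_eq_div]

lemma abs_xseq_sub_le (n : ℤ) : |xseq n - n| ≤ 1 / 8 := by
  unfold xseq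
  split_ifs <;> rw [abs_le] <;> constructor <;> linarith

lemma xseq_add_one_sub (n : ℤ) :
    xseq (n + 1) - xseq n = 3 / 4 ∨ xseq (n + 1) - xseq n = 5 / 4 := by
  unfold xseq
  rcases Int.even_or_odd n with hn | hn
  · rw [if_neg (Int.not_even_iff_odd.2 hn.add_one), if_pos hn]
    left; push_cast; ring
  · rw [if_pos hn.add_one, if_neg (Int.not_even_iff_odd.2 hn)]
    right; push_cast; ring

lemma one_eighth_le_sin_sq {a : ℝ} (h : ∀ m : ℤ, 1 / 8 ≤ |a - m|) :
    1 / 8 ≤ Real.sin (π * a) ^ 2 := by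
  set r := a - round a
  have hr : 1 / 8 ≤ |r| := h (round a)
  have hr' : |r| ≤ 1 / 2 := abs_sub_round a
  have hperiod : Real.sin (π * a) ^ 2 = Real.sin (π * |r|) ^ 2 := by
    rw [show π * a = π * r + round a * π by ring, Real.sin_add_int_mul_pi, mul_pow,
      ← sq_abs ((-1 : ℝ) ^ round a), abs_neg_one_zpow, one_pow, one_mul]
    rcases abs_cases r with ⟨h, -⟩ | ⟨h, -⟩
    · rw [h]
    · rw [h, mul_neg, Real.sin_neg, neg_sq]
  have hmono : Real.sin (π / 8) ≤ Real.sin (π * |r|) :=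
    Real.sin_le_sin_of_le_of_le_pi_div_two (by linarith [Real.pi_pos])
      (by nlinarith [Real.pi_pos]) (by nlinarith [Real.pi_pos])
  have h8 : 1 / 8 ≤ Real.sin (π / 8) ^ 2 := by
    have hs : √2 < 3 / 2 := by rw [Real.sqrt_lt' (by norm_num)]; norm_num
    rw [Real.sin_pi_div_eight, div_pow, Real.sq_sqrt (by linarith)]
    linarith
  rw [hperiod]
  exact h8.trans (pow_le_pow_left₀ (Real.sin_nonneg_of_nonneg_of_le_pi (by positivity)
    (by linarith [Real.pi_pos])) hmono 2)

lemma one_eighth_le_abs_add_sub_int {a d : ℝ} (hd : d = 3 / 4 ∨ d = 5 / 4) {m₁ : ℤ}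
    (h₁ : |a - m₁| < 1 / 8) (m₂ : ℤ) : 1 / 8 ≤ |a + d - m₂| := by
  by_contra! h₂
  rw [abs_lt] at h₁ h₂
  rcases hd with rfl | rfl
  · have hlo : ((0 : ℤ) : ℝ) < ((m₂ - m₁ : ℤ) : ℝ) := by push_cast; linarith
    have hhi : ((m₂ - m₁ : ℤ) : ℝ) < ((1 : ℤ) : ℝ) := by push_cast; linarith
    have := Int.cast_lt.1 hlo
    have := Int.cast_lt.1 hhi
    omega
  · have hlo : ((1 : ℤ) : ℝ) < ((m₂ - m₁ : ℤ) : ℝ) := by push_cast; linarith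
    have hhi : ((m₂ - m₁ : ℤ) : ℝ) < ((2 : ℤ) : ℝ) := by push_cast; linarith
    have := Int.cast_lt.1 hlo
    have := Int.cast_lt.1 hhi
    omega

lemma exists_consecutive_ne_zero_near (u : ℝ) :
    ∃ n : ℤ, n ≠ 0 ∧ n + 1 ≠ 0 ∧ |(n : ℝ) - u| ≤ 3 ∧ |((n + 1 : ℤ) : ℝ) - u| ≤ 3 := by
  have h₁ := Int.floor_le u
  have h₂ := Int.lt_floor_add_one u
  rcases le_or_gt 0 ⌊u⌋ with hk | hk
  · refine ⟨⌊u⌋ + 1, by omega, by omega, ?_, ?_⟩ <;>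
      (rw [abs_le]; push_cast; constructor <;> linarith)
  · refine ⟨⌊u⌋ - 2, by omega, by omega, ?_, ?_⟩ <;>
      (rw [abs_le]; push_cast; constructor <;> linarith)

lemma abs_xseq_sub_le_of_abs_sub_le {n : ℤ} {u r : ℝ} (h : |(n : ℝ) - u| ≤ r) :
    |xseq n - u| ≤ r + 1 / 8 :=
  calc |xseq n - u| ≤ |xseq n - n| + |(n : ℝ) - u| := abs_sub_le _ _ _
    _ ≤ r + 1 / 8 := by linarith [abs_xseq_sub_le n]

lemma exists_xseq_near_one_eighth_le_sin_sq (u : ℝ) :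
    ∃ n : ℤ, n ≠ 0 ∧ |xseq n - u| ≤ 4 ∧ 1 / 8 ≤ Real.sin (π * (xseq n - u)) ^ 2 := by
  obtain ⟨n, hn, hn₁, hu, hu₁⟩ := exists_consecutive_ne_zero_near u
  by_cases hfar : ∀ m : ℤ, 1 / 8 ≤ |xseq n - u - m|
  · exact ⟨n, hn, by linarith [abs_xseq_sub_le_of_abs_sub_le hu], one_eighth_le_sin_sq hfar⟩
  obtain ⟨m₁, hm₁⟩ := not_forall.1 hfar
  refine ⟨n + 1, hn₁, by linarith [abs_xseq_sub_le_of_abs_sub_le hu₁],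
    one_eighth_le_sin_sq fun m₂ => ?_⟩
  simpa only [add_sub_cancel, sub_add_sub_cancel', sub_add_comm]
    using one_eighth_le_abs_add_sub_int (xseq_add_one_sub n) (not_le.1 hm₁) m₂

lemma exists_finset_ne_zero_near (u : ℝ) (M : ℕ) :
    ∃ s : Finset ℤ, 0 ∉ s ∧ 2 * M ≤ s.card ∧ ∀ n ∈ s, |(n : ℝ) - u| ≤ M + 1 := by
  refine ⟨(Finset.Icc (⌊u⌋ - M) (⌊u⌋ + M)).erase 0, Finset.notMem_erase 0 _, ?_, fun n hn => ?_⟩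
  · refine le_trans ?_ Finset.pred_card_le_card_erase
    rw [Int.card_Icc]
    omega
  · obtain ⟨hlo, hhi⟩ := Finset.mem_Icc.1 (Finset.mem_of_mem_erase hn)
    have hlo' : ((⌊u⌋ - M : ℤ) : ℝ) ≤ n := Int.cast_le.2 hlo
    have hhi' : (n : ℝ) ≤ ((⌊u⌋ + M : ℤ) : ℝ) := Int.cast_le.2 hhi
    push_cast at hlo' hhi'
    rw [abs_le]
    constructor <;> linarith [Int.floor_le u, Int.lt_floor_add_one u]

lemma sum_le_tsum_ne_zero {f : ℤ → ℝ} (hf : 0 ≤ f) (hsum : Summable fun n : {n : ℤ // n ≠ 0} => f n)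
    {s : Finset ℤ} (hs : 0 ∉ s) : ∑ n ∈ s, f n ≤ ∑' n : {n : ℤ // n ≠ 0}, f n := by
  rw [← Finset.sum_subtype_of_mem f (p := (· ≠ 0)) fun n hn h => hs (h ▸ hn)]
  exact hsum.sum_le_tsum _ fun n _ => hf n

lemma abs_le_two_mul_abs_xseq_sub {n : ℤ} {u : ℝ} (hn : 2 * |u| + 1 ≤ |(n : ℝ)|) :
    |(n : ℝ)| ≤ 2 * |xseq n - u| := by
  have h₁ := abs_xseq_sub_le n
  have h₂ := abs_sub_abs_le_abs_sub (n : ℝ) (xseq n - u)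
  have h₃ : |(n : ℝ) - (xseq n - u)| ≤ |xseq n - n| + |u| := by
    rw [show (n : ℝ) - (xseq n - u) = -(xseq n - n) + u by ring]
    exact (abs_add_le _ _).trans_eq (by rw [abs_neg])
  linarith

lemma summable_norm_pwSinc_xseq_sub_sq (l : ℂ) :
    Summable fun n : ℤ => ‖pwSinc (xseq n - l)‖ ^ 2 := by
  set C := 4 * (1 + Real.sinh (π * l.im) ^ 2) / π ^ 2
  refine Summable.of_norm_bounded_eventually (g := fun n : ℤ => C * (1 / (n : ℝ) ^ 2))
    ((Real.summable_one_div_int_pow.2 one_lt_two).mul_left C) ?_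
  filter_upwards [(tendsto_norm_cocompact_atTop.comp Int.tendsto_coe_cofinite).eventually_ge_atTop
    (2 * |l.re| + 1)] with n hn
  rw [Function.comp_apply, Real.norm_eq_abs] at hn
  have h2t := abs_le_two_mul_abs_xseq_sub hn
  have ht : xseq n - l.re ≠ 0 := fun h => by
    rw [h, abs_zero] at h2t; linarith [abs_nonneg l.re]
  have hsq : (n : ℝ) ^ 2 / 4 ≤ (xseq n - l.re) ^ 2 := by
    nlinarith [sq_abs (n : ℝ), sq_abs (xseq n - l.re), abs_nonneg (n : ℝ)]
  have hn0 : (n : ℝ) ≠ 0 := fun h => by rw [h, abs_zero] at hn; linarith [abs_nonneg l.re]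
  rw [Real.norm_of_nonneg (by positivity)]
  calc ‖pwSinc (xseq n - l)‖ ^ 2
      ≤ (1 + Real.sinh (π * l.im) ^ 2) / (π ^ 2 * (xseq n - l.re) ^ 2) :=
        norm_pwSinc_ofReal_sub_sq_le_of_ne (sub_ne_zero.1 ht)
    _ ≤ (1 + Real.sinh (π * l.im) ^ 2) / (π ^ 2 * ((n : ℝ) ^ 2 / 4)) := by gcongr
    _ = C * (1 / (n : ℝ) ^ 2) := by simp only [C]; field_simp

lemma one_div_le_tsum_of_abs_im_le_one {l : ℂ} (hv : |l.im| ≤ 1) :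
    1 / (136 * π ^ 2) ≤ ∑' n : {n : ℤ // n ≠ 0}, ‖pwSinc (xseq n - l)‖ ^ 2 := by
  obtain ⟨n, hn, hnear, hsin⟩ := exists_xseq_near_one_eighth_le_sin_sq l.re
  have ht : xseq n - l.re ≠ 0 := fun h => by
    rw [h, mul_zero, Real.sin_zero] at hsin; norm_num at hsin
  have hv2 : l.im ^ 2 ≤ 1 := by nlinarith [sq_abs l.im, abs_nonneg l.im]
  have ht2 : (xseq n - l.re) ^ 2 ≤ 16 := by
    nlinarith [sq_abs (xseq n - l.re), abs_nonneg (xseq n - l.re)]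
  calc 1 / (136 * π ^ 2) = (1 / 8) / (π ^ 2 * 17) := by field_simp; norm_num
    _ ≤ (Real.sin (π * (xseq n - l.re)) ^ 2 + Real.sinh (π * l.im) ^ 2) /
          (π ^ 2 * ((xseq n - l.re) ^ 2 + l.im ^ 2)) := by
        gcongr
        · linarith [sq_nonneg (Real.sinh (π * l.im))]
        · linarith
    _ ≤ ‖pwSinc (xseq n - l)‖ ^ 2 := le_norm_pwSinc_ofReal_sub_sq l _
    _ = ∑ m ∈ {n}, ‖pwSinc (xseq m - l)‖ ^ 2 := (Finset.sum_singleton _ _).symm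
    _ ≤ _ := sum_le_tsum_ne_zero (fun _ => by positivity)
        ((summable_norm_pwSinc_xseq_sub_sq l).subtype _) (by simpa using hn.symm)

lemma sinh_sq_div_le_tsum_of_one_le_abs_im {l : ℂ} (hv : 1 ≤ |l.im|) :
    Real.sinh (π * l.im) ^ 2 / (π * |l.im|) / (6 * π) ≤
      ∑' n : {n : ℤ // n ≠ 0}, ‖pwSinc (xseq n - l)‖ ^ 2 := by
  set S := Real.sinh (π * l.im) ^ 2
  set M := ⌈|l.im|⌉₊
  obtain ⟨s, hs0, hcard, hnear⟩ := exists_finset_ne_zero_near l.re M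
  have hM : |l.im| ≤ M := Nat.le_ceil _
  have hM' : (M : ℝ) < |l.im| + 1 := Nat.ceil_lt_add_one (abs_nonneg _)
  have hterm : ∀ n ∈ s, S / (11 * π ^ 2 * l.im ^ 2) ≤ ‖pwSinc (xseq n - l)‖ ^ 2 := by
    intro n hn
    have ht := abs_xseq_sub_le_of_abs_sub_le (hnear n hn)
    have ht2 : (xseq n - l.re) ^ 2 + l.im ^ 2 ≤ 11 * l.im ^ 2 := by
      nlinarith [sq_abs (xseq n - l.re), abs_nonneg (xseq n - l.re), sq_abs l.im]
    refine le_trans ?_ (le_norm_pwSinc_ofReal_sub_sq l _)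
    have : 0 < l.im ^ 2 := by nlinarith [sq_abs l.im]
    rw [show 11 * π ^ 2 * l.im ^ 2 = π ^ 2 * (11 * l.im ^ 2) by ring]
    gcongr
    linarith [sq_nonneg (Real.sin (π * (xseq n - l.re)))]
  calc S / (π * |l.im|) / (6 * π) = S / (6 * π ^ 2 * |l.im|) := by ring
    _ ≤ (2 * M : ℕ) * (S / (11 * π ^ 2 * l.im ^ 2)) := by
        rw [← sq_abs l.im]
        calc S / (6 * π ^ 2 * |l.im|) ≤ 2 * |l.im| * (S / (11 * π ^ 2 * |l.im| ^ 2)) := by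
              rw [show 2 * |l.im| * (S / (11 * π ^ 2 * |l.im| ^ 2)) =
                S / (11 / 2 * π ^ 2 * |l.im|) by field_simp]
              gcongr
              norm_num
          _ ≤ _ := by push_cast; gcongr
    _ ≤ s.card * (S / (11 * π ^ 2 * l.im ^ 2)) := by gcongr
    _ = ∑ n ∈ s, S / (11 * π ^ 2 * l.im ^ 2) := by rw [Finset.sum_const, nsmul_eq_mul]
    _ ≤ ∑ n ∈ s, ‖pwSinc (xseq n - l)‖ ^ 2 := Finset.sum_le_sum hterm
    _ ≤ _ := sum_le_tsum_ne_zero (fun _ => by positivity)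
        ((summable_norm_pwSinc_xseq_sub_sq l).subtype _) hs0

lemma sinh_le_mul_exp (y : ℝ) : Real.sinh y ≤ y * Real.exp y := by
  have h : Real.exp (-y) = Real.exp y * Real.exp (-2 * y) := by rw [← Real.exp_add]; ring_nf
  rw [Real.sinh_eq, h]
  nlinarith [Real.add_one_le_exp (-2 * y), Real.exp_pos y]

lemma sinh_sq_pi_mul_abs (v : ℝ) : Real.sinh (π * |v|) ^ 2 = Real.sinh (π * v) ^ 2 := by
  rw [← abs_of_pos Real.pi_pos, ← abs_mul, ← Real.abs_sinh, sq_abs, abs_of_pos Real.pi_pos]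

lemma sinh_sq_div_le_of_abs_le_one {v : ℝ} (hv : |v| ≤ 1) :
    Real.sinh (π * v) ^ 2 / (π * |v|) ≤ 7000 := by
  rcases eq_or_ne v 0 with rfl | hv0
  · simp
  rw [← sinh_sq_pi_mul_abs]
  set y := π * |v|
  have hy : 0 < y := by positivity
  have hyπ : y ≤ π := by nlinarith [Real.pi_pos]
  have hexp : Real.exp y ^ 2 ≤ 3 ^ 7 :=
    calc Real.exp y ^ 2 = Real.exp (2 * y) := by rw [← Real.exp_nat_mul]; norm_num
      _ ≤ Real.exp 1 ^ 7 := by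
        rw [← Real.exp_nat_mul]; exact Real.exp_le_exp.2 (by push_cast; linarith [Real.pi_lt_d2])
      _ ≤ 3 ^ 7 := by gcongr; exact Real.exp_one_lt_three.le
  rw [div_le_iff₀ hy]
  calc Real.sinh y ^ 2 ≤ (y * Real.exp y) ^ 2 :=
        pow_le_pow_left₀ (Real.sinh_nonneg_iff.2 hy.le) (sinh_le_mul_exp y) 2
    _ = y * Real.exp y ^ 2 * y := by ring
    _ ≤ 7000 * y := by gcongr; nlinarith [Real.pi_lt_d2]

lemma pi_le_sinh_sq_div_of_one_le_abs {v : ℝ} (hv : 1 ≤ |v|) :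
    π ≤ Real.sinh (π * v) ^ 2 / (π * |v|) := by
  rw [← sinh_sq_pi_mul_abs]
  have hy : π ≤ π * |v| := le_mul_of_one_le_right Real.pi_pos.le hv
  rw [le_div_iff₀ (by linarith [Real.pi_pos])]
  nlinarith [Real.self_le_sinh_iff.2 (by linarith [Real.pi_pos] : 0 ≤ π * |v|), Real.pi_pos]

/-- The `L²(μ)` norms (`μ = Σ_{n≠0} δ_{x_n}`) of the normalized Paley–Wiener reproducing
kernels `K_λ = c_λ sinc(π(·-λ))` are uniformly bounded below. -/
theorem pw_normalized_kernels_bounded_below :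
    ∃ δ > (0:ℝ), ∀ l : ℂ,
      δ ≤ ∑' n : {n : ℤ // n ≠ 0}, (pwC l * ‖pwSinc ((xseq n.1 : ℂ) - l)‖) ^ 2 := by
  refine ⟨1 / 10 ^ 8, by norm_num, fun l => ?_⟩
  rw [tsum_pwC_mul_sq, le_div_iff₀ (sincNormSq_pos l)]
  have hQ := sincNormSq_le l
  have hπ := Real.pi_lt_d2
  rcases le_total |l.im| 1 with hv | hv
  · calc 1 / 10 ^ 8 * sincNormSq l ≤ 1 / 10 ^ 8 * (2 * π + 7000) := by
          gcongr; linarith [sinh_sq_div_le_of_abs_le_one hv]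
      _ ≤ 1 / (136 * π ^ 2) := by
          rw [le_div_iff₀ (by positivity)]; nlinarith [Real.pi_pos]
      _ ≤ _ := one_div_le_tsum_of_abs_im_le_one hv
  · have hA := pi_le_sinh_sq_div_of_one_le_abs hv
    calc 1 / 10 ^ 8 * sincNormSq l
        ≤ 1 / 10 ^ 8 * (3 * (Real.sinh (π * l.im) ^ 2 / (π * |l.im|))) := by gcongr; linarith
      _ ≤ Real.sinh (π * l.im) ^ 2 / (π * |l.im|) / (6 * π) := by
          rw [le_div_iff₀ (by positivity)]; nlinarith [Real.pi_pos]
      _ ≤ _ := sinh_sq_div_le_tsum_of_one_le_abs_im hv
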